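/- Let U ⊆ ℂ^N be open, let U* = {conj z : z ∈ U}, and let Φ : ℂ^N × ℂ^N → ℂ be holomorphic on U × U*. Let D ⊆ ℂ^m be a nonempty connected open set and let f : D → ℂ^N be holomorphic with f(D) ⊆ U. Suppose Φ(f(t), conj(f(t))) = 0 for every t ∈ D. Then for every fixed t₀ ∈ D and every t ∈ D one has Φ(f(t), conj(f(t₀))) = 0. -/

import Mathlib

/-!
Put `h(t, s) := Φ(f t, conj (f (conj s)))`. This is holomorphic on the connected open set
`D × D*` and vanishes on the totally real set `{(t, conj t)}`. In the coordinates
`t = x + i y`, `s = x - i y` that set becomes the real points of `ℂ^{2m}`, and a holomorphic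
function vanishing on the real points of a polydisc centred at a real point vanishes on the
polydisc (one-variable identity theorem, one coordinate at a time). So `h` vanishes near a
point `(t₁, conj t₁)`, hence on all of `D × D*`; evaluate at `(t, conj t₀)`.
-/

/-- Componentwise complex conjugation on `ℂ^N`. -/
def conjVec {N : ℕ} (z : Fin N → ℂ) : Fin N → ℂ := fun i => (starRingEnd ℂ) (z i)

open Filter Topology Set

section conjVec

variable {N : ℕ}

lemma conjVec_involutive : Function.Involutive (conjVec (N := N)) :=
  fun z => funext fun i => by simp [conjVec]

lemma conjVec_add (z w : Fin N → ℂ) : conjVec (z + w) = conjVec z + conjVec w :=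
  funext fun i => by simp [conjVec]

lemma conjVec_smul (c : ℂ) (z : Fin N → ℂ) :
    conjVec (c • z) = (starRingEnd ℂ) c • conjVec z :=
  funext fun i => by simp [conjVec]

lemma nnnorm_conjVec (z : Fin N → ℂ) : ‖conjVec z‖₊ = ‖z‖₊ := by
  simp [Pi.nnnorm_def, conjVec]

lemma norm_conjVec (z : Fin N → ℂ) : ‖conjVec z‖ = ‖z‖ :=
  congrArg NNReal.toReal (nnnorm_conjVec z)

lemma enorm_conjVec (z : Fin N → ℂ) : ‖conjVec z‖ₑ = ‖z‖ₑ :=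
  congrArg ENNReal.ofNNReal (nnnorm_conjVec z)

lemma continuous_conjVec : Continuous (conjVec (N := N)) :=
  continuous_pi fun i => Complex.continuous_conj.comp (continuous_apply i)

lemma HasSum.conjVec {ι : Type*} {F : ι → Fin N → ℂ} {z : Fin N → ℂ} (h : HasSum F z) :
    HasSum (fun n => conjVec (F n)) (conjVec z) :=
  Pi.hasSum.2 fun i => Complex.hasSum_conj'.2 (Pi.hasSum.1 h i)

end conjVec

namespace FormalMultilinearSeries

variable {m N : ℕ} (p : FormalMultilinearSeries ℂ (Fin m → ℂ) (Fin N → ℂ))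

/-- The power series of `s ↦ conj (f (conj s))` when `p` is that of `f`. The two conjugations
cancel on scalars, so `v ↦ conj (p n (conj ∘ v))` is again `ℂ`-multilinear. -/
noncomputable def conjConj : FormalMultilinearSeries ℂ (Fin m → ℂ) (Fin N → ℂ) := fun n =>
  MultilinearMap.mkContinuous
    { toFun := fun v => conjVec (p n (conjVec ∘ v))
      map_update_add' := fun v i x y => by
        simp only [Function.comp_update, conjVec_add, (p n).map_update_add]
      map_update_smul' := fun v i c x => by
        simp only [Function.comp_update, conjVec_smul, (p n).map_update_smul,
          starRingEnd_self_apply] }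
    ‖p n‖ fun v => by
      simpa [norm_conjVec] using (p n).le_opNorm (conjVec ∘ v)

lemma conjConj_apply (n : ℕ) (v : Fin n → Fin m → ℂ) :
    p.conjConj n v = conjVec (p n (conjVec ∘ v)) := rfl

lemma radius_le_radius_conjConj : p.radius ≤ p.conjConj.radius :=
  radius_le_of_le fun _ => MultilinearMap.mkContinuous_norm_le _ (norm_nonneg _) _

end FormalMultilinearSeries

section conjConj

variable {m N : ℕ} {f : (Fin m → ℂ) → (Fin N → ℂ)} {y : Fin m → ℂ}

theorem HasFPowerSeriesOnBall.conjConj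
    {p : FormalMultilinearSeries ℂ (Fin m → ℂ) (Fin N → ℂ)} {r : ENNReal}
    (hf : HasFPowerSeriesOnBall f p (conjVec y) r) :
    HasFPowerSeriesOnBall (fun s => conjVec (f (conjVec s))) p.conjConj y r where
  r_le := hf.r_le.trans p.radius_le_radius_conjConj
  r_pos := hf.r_pos
  hasSum {z} hz := by
    have hz' : conjVec z ∈ Metric.eball 0 r := by simpa [enorm_conjVec] using hz
    simpa [conjVec_add, conjVec_involutive _, FormalMultilinearSeries.conjConj_apply,
      Function.comp_def] using (hf.hasSum hz').conjVec

theorem AnalyticAt.conjConj (hf : AnalyticAt ℂ f (conjVec y)) :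
    AnalyticAt ℂ (fun s => conjVec (f (conjVec s))) y :=
  let ⟨_, _, hp⟩ := hf
  hp.conjConj.analyticAt

end conjConj

section RealPoints

variable {E : Type*} [NormedAddCommGroup E] [NormedSpace ℂ E]

theorem AnalyticOnNhd.eqOn_zero_of_preconnected_of_eventually_ofReal_eq_zero {φ : ℂ → E}
    {U : Set ℂ} {c : ℝ} (hφ : AnalyticOnNhd ℂ φ U) (hU : IsPreconnected U)
    (hc : (c : ℂ) ∈ U) (h0 : ∀ᶠ x : ℝ in 𝓝 c, φ x = 0) : EqOn φ 0 U := by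
  refine hφ.eqOn_zero_of_preconnected_of_frequently_eq_zero hU hc ?_
  have hreal : Tendsto ((↑) : ℝ → ℂ) (𝓝[≠] c) (𝓝[≠] (c : ℂ)) :=
    tendsto_nhdsWithin_of_tendsto_nhds_of_eventually_within _
      Complex.continuous_ofReal.continuousWithinAt.tendsto
      (eventually_nhdsWithin_of_forall fun x hx => Complex.ofReal_injective.ne hx)
  exact hreal.frequently (eventually_nhdsWithin_of_eventually_nhds h0).frequently

variable {ι : Type*} [Fintype ι] [DecidableEq ι]

lemma Function.update_mem_ball_pi {X : Type*} [PseudoMetricSpace X] {z p : ι → X} {r : ℝ}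
    (hr : 0 < r) (hz : z ∈ Metric.ball p r) {κ : ι} {w : X} (hw : w ∈ Metric.ball (p κ) r) :
    Function.update z κ w ∈ Metric.ball p r := by
  rw [Metric.mem_ball, dist_pi_lt_iff hr] at hz ⊢
  intro i
  rcases eq_or_ne i κ with rfl | hi
  · simpa using hw
  · simpa [hi] using hz i

lemma analyticAt_update (z : ι → ℂ) (κ : ι) (w : ℂ) :
    AnalyticAt ℂ (Function.update z κ) w := by
  refine analyticAt_pi_iff.2 fun i => ?_
  rcases eq_or_ne i κ with rfl | hi
  · simp only [Function.update_self]
    exact analyticAt_id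
  · simpa [Function.update_of_ne hi] using analyticAt_const

theorem eventuallyEq_zero_of_eventually_im_eq_zero {g : (ι → ℂ) → E} {p : ι → ℝ}
    (hg : ∀ᶠ z in 𝓝 (fun i => (p i : ℂ)), AnalyticAt ℂ g z)
    (h0 : ∀ᶠ z in 𝓝 (fun i => (p i : ℂ)), (∀ i, (z i).im = 0) → g z = 0) :
    g =ᶠ[𝓝 (fun i => (p i : ℂ))] 0 := by
  obtain ⟨r, hr, hball⟩ := Metric.eventually_nhds_iff_ball.1 (hg.and h0)
  have hcomplexify : ∀ S : Finset ι, ∀ z ∈ Metric.ball (fun i => (p i : ℂ)) r,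
      (∀ i ∉ S, (z i).im = 0) → g z = 0 := by
    intro S
    induction S using Finset.induction_on with
    | empty => exact fun z hz hre => (hball z hz).2 fun i => hre i (Finset.notMem_empty i)
    | insert κ S _ ih =>
      intro z hz hre
      have hline : EqOn (fun w => g (Function.update z κ w)) 0 (Metric.ball (p κ : ℂ) r) := by
        refine AnalyticOnNhd.eqOn_zero_of_preconnected_of_eventually_ofReal_eq_zero
          (fun w hw => (hball _ (Function.update_mem_ball_pi hr hz hw)).1.comp
            (analyticAt_update z κ w))
          (convex_ball _ _).isPreconnected (Metric.mem_ball_self hr) ?_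
        filter_upwards [Metric.ball_mem_nhds (p κ) hr] with x hx
        refine ih _ (Function.update_mem_ball_pi hr hz ?_) fun i hi => ?_
        · simpa [Complex.dist_eq, ← Complex.ofReal_sub, Real.dist_eq] using hx
        · rcases eq_or_ne i κ with rfl | hiκ
          · simp
          · simpa [hiκ] using hre i (by simp [hiκ, hi])
      simpa using hline ((dist_pi_lt_iff hr).1 hz κ)
  filter_upwards [Metric.ball_mem_nhds _ hr] with z hz
  exact hcomplexify Finset.univ z hz fun i hi => absurd (Finset.mem_univ i) hi

end RealPoints

section Diagonal

/-- `w ↦ (x + i y, x - i y)` with `x = w ∘ inl`, `y = w ∘ inr`: the real points of `ℂ^{2m}`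
go to the points `(t, conj t)` with `t = x + i y`. -/
noncomputable def reImEquiv (m : ℕ) :
    (Fin m ⊕ Fin m → ℂ) ≃L[ℂ] (Fin m → ℂ) × (Fin m → ℂ) :=
  LinearEquiv.toContinuousLinearEquiv
    { toFun := fun w => (fun i => w (.inl i) + Complex.I * w (.inr i),
        fun i => w (.inl i) - Complex.I * w (.inr i))
      invFun := fun ts => Sum.elim (fun i => (ts.1 i + ts.2 i) / 2)
        (fun i => (ts.1 i - ts.2 i) / (2 * Complex.I))
      map_add' := fun v w => by ext i <;> simp only [Pi.add_apply, Prod.mk_add_mk] <;> ring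
      map_smul' := fun c w => by
        ext i <;> simp only [Pi.smul_apply, smul_eq_mul, RingHom.id_apply, Prod.smul_mk] <;> ring
      left_inv := fun w => by ext (i | i) <;> simp [field, one_add_one_eq_two]
      right_inv := fun ts => by ext i <;> simp [field, one_add_one_eq_two] }

variable {m : ℕ}

lemma reImEquiv_apply (w : Fin m ⊕ Fin m → ℂ) :
    reImEquiv m w = (fun i => w (.inl i) + Complex.I * w (.inr i),
      fun i => w (.inl i) - Complex.I * w (.inr i)) := rfl

lemma reImEquiv_snd_eq_conjVec_fst {w : Fin m ⊕ Fin m → ℂ} (hw : ∀ j, (w j).im = 0) :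
    (reImEquiv m w).2 = conjVec (reImEquiv m w).1 := by
  ext i
  simp [reImEquiv_apply, conjVec, Complex.conj_eq_iff_im.2 (hw _), sub_eq_add_neg]

lemma reImEquiv_re_im (t : Fin m → ℂ) :
    reImEquiv m (fun j => (Sum.elim (fun i => (t i).re) (fun i => (t i).im) j : ℂ)) =
      (t, conjVec t) := by
  ext i <;> apply Complex.ext <;> simp [reImEquiv_apply, conjVec]

theorem eventuallyEq_zero_of_eventually_eq_zero_conjVec {E : Type*} [NormedAddCommGroup E]
    [NormedSpace ℂ E] {h : (Fin m → ℂ) × (Fin m → ℂ) → E} {t₁ : Fin m → ℂ}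
    (hh : ∀ᶠ ts in 𝓝 (t₁, conjVec t₁), AnalyticAt ℂ h ts)
    (h0 : ∀ᶠ t in 𝓝 t₁, h (t, conjVec t) = 0) :
    h =ᶠ[𝓝 (t₁, conjVec t₁)] 0 := by
  set q : Fin m ⊕ Fin m → ℝ := Sum.elim (fun i => (t₁ i).re) (fun i => (t₁ i).im)
  have hq : reImEquiv m (fun j => (q j : ℂ)) = (t₁, conjVec t₁) := reImEquiv_re_im t₁
  rw [← hq, ← (reImEquiv m).map_nhds_eq] at hh ⊢
  have h0' : ∀ᶠ w in 𝓝 (fun j => (q j : ℂ)),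
      h ((reImEquiv m w).1, conjVec (reImEquiv m w).1) = 0 :=
    ((continuous_fst.comp (reImEquiv m).continuous).tendsto' _ t₁
      (congrArg Prod.fst hq)).eventually h0
  refine eventually_map.2 (eventuallyEq_zero_of_eventually_im_eq_zero
    ((eventually_map.1 hh).mono fun w hw => hw.comp ((reImEquiv m).analyticAt w))
    (h0'.mono fun w hw hre => ?_))
  rwa [← reImEquiv_snd_eq_conjVec_fst hre] at hw

end Diagonal

theorem AnalyticOnNhd.comp_prod_conjConj {m N : ℕ} {U : Set (Fin N → ℂ)}
    {Φ : (Fin N → ℂ) × (Fin N → ℂ) → ℂ}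
    (hΦ : AnalyticOnNhd ℂ Φ (U ×ˢ (conjVec '' U)))
    {D : Set (Fin m → ℂ)} {f : (Fin m → ℂ) → (Fin N → ℂ)} (hf : AnalyticOnNhd ℂ f D)
    (hfU : MapsTo f D U) :
    AnalyticOnNhd ℂ (fun ts => Φ (f ts.1, conjVec (f (conjVec ts.2))))
      (D ×ˢ (conjVec ⁻¹' D)) := by
  rintro ⟨s, s'⟩ ⟨hs, hs'⟩
  have hF : AnalyticAt ℂ (fun ts : (Fin m → ℂ) × (Fin m → ℂ) =>
      (f ts.1, conjVec (f (conjVec ts.2)))) (s, s') :=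
    ((hf s hs).comp analyticAt_fst).prod ((hf _ hs').conjConj.comp analyticAt_snd)
  exact (hΦ _ ⟨hfU hs, mem_image_of_mem _ (hfU hs')⟩).comp hF

theorem segre_contains_leaf_general (N m : ℕ) (U : Set (Fin N → ℂ))
    (Φ : (Fin N → ℂ) × (Fin N → ℂ) → ℂ)
    (hΦ : AnalyticOnNhd ℂ Φ (U ×ˢ (conjVec '' U)))
    (D : Set (Fin m → ℂ)) (hD : IsOpen D) (hDconn : IsConnected D)
    (f : (Fin m → ℂ) → (Fin N → ℂ)) (hf : AnalyticOnNhd ℂ f D)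
    (hfU : Set.MapsTo f D U)
    (hzero : ∀ t ∈ D, Φ (f t, conjVec (f t)) = 0) :
    ∀ t₀ ∈ D, ∀ t ∈ D, Φ (f t, conjVec (f t₀)) = 0 := by
  intro t₀ ht₀ t ht
  have hh := hΦ.comp_prod_conjConj hf hfU
  have hΩconn : IsPreconnected (D ×ˢ (conjVec ⁻¹' D)) := by
    rw [← conjVec_involutive.image_eq_preimage_symm]
    exact (hDconn.prod (hDconn.image _ continuous_conjVec.continuousOn)).isPreconnected
  have hmem : ∀ {s s'}, s ∈ D → s' ∈ D → (s, conjVec s') ∈ D ×ˢ (conjVec ⁻¹' D) :=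
    fun hs hs' => ⟨hs, by simpa [mem_preimage, conjVec_involutive _] using hs'⟩
  obtain ⟨t₁, ht₁⟩ := hDconn.nonempty
  have hlocal :
      (fun ts => Φ (f ts.1, conjVec (f (conjVec ts.2)))) =ᶠ[𝓝 (t₁, conjVec t₁)] 0 := by
    have hΩ : IsOpen (D ×ˢ (conjVec ⁻¹' D)) := hD.prod (hD.preimage continuous_conjVec)
    refine eventuallyEq_zero_of_eventually_eq_zero_conjVec
      (eventually_of_mem (hΩ.mem_nhds (hmem ht₁ ht₁)) hh) ?_
    filter_upwards [hD.mem_nhds ht₁] with s hs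
    simpa [conjVec_involutive _] using hzero s hs
  simpa [conjVec_involutive _] using hh.eqOn_zero_of_preconnected_of_eventuallyEq_zero hΩconn
    (hmem ht₁ ht₁) hlocal (hmem ht ht₀)

/-- If `Φ` is holomorphic on `U × U*` and `Φ (f t, conj (f t)) = 0` along a holomorphic map
`f` on a nonempty connected open set `D` with `f(D) ⊆ U`, then for every fixed `t₀ ∈ D`
and every `t ∈ D` one has `Φ (f t, conj (f t₀)) = 0`. -/
theorem segre_contains_leaf (N m : ℕ) (U : Set (Fin N → ℂ)) (hU : IsOpen U)
    (Φ : (Fin N → ℂ) × (Fin N → ℂ) → ℂ)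
    (hΦ : AnalyticOnNhd ℂ Φ (U ×ˢ (conjVec '' U)))
    (D : Set (Fin m → ℂ)) (hD : IsOpen D) (hDconn : IsConnected D)
    (f : (Fin m → ℂ) → (Fin N → ℂ)) (hf : AnalyticOnNhd ℂ f D)
    (hfU : Set.MapsTo f D U)
    (hzero : ∀ t ∈ D, Φ (f t, conjVec (f t)) = 0) :
    ∀ t₀ ∈ D, ∀ t ∈ D, Φ (f t, conjVec (f t₀)) = 0 :=
  segre_contains_leaf_general N m U Φ hΦ D hD hDconn f hf hfU hzero
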